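/- arXiv:1909.08967 — 4 statements merged into one kernel-verified Lean document; each statement's English description precedes it below -/
import Mathlib

section
/- Fix 0 ≤ k < n and p > 1. There is a constant C > 0 such that every x ∈ W^{1,p}([0,1],ℝ^{2n}) satisfying x(0), x(1) ∈ ℝ^{n,k} and ∫₀¹ x(t) dt ∈ J(V₀^{n,k}) obeys ‖x‖_{L^∞} ≤ C‖ẋ‖_{L^p}. -/
open MeasureTheory Set Filter
open scoped Pointwise

noncomputable section

abbrev Esp (n : ℕ) := EuclideanSpace ℝ (Fin (2 * n))

/-- The standard complex structure `J` on `ℝ^{2n}`, sending `(q, p)` to `(-p, q)`. -/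
def Jfun (n : ℕ) (x : Esp n) : Esp n := WithLp.toLp 2 fun (i : Fin (2 * n)) =>
  if h : (i : ℕ) < n then -x ⟨(i : ℕ) + n, by omega⟩
  else x ⟨(i : ℕ) - n, by have := i.isLt; omega⟩

/-- The coisotropic subspace `ℝ^{n,k} = {(q₁,…,qₙ,p₁,…,p_k,0,…,0)}` of `ℝ^{2n}`. -/
def Rnk (n k : ℕ) : Set (Esp n) :=
  {x | ∀ i : Fin (2 * n), n + k ≤ (i : ℕ) → x i = 0}

/-- The subspace `V₀^{n,k} = {(0,…,0,q_{k+1},…,qₙ,0,…,0)}` of `ℝ^{2n}`. -/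
def V0 (n k : ℕ) : Set (Esp n) :=
  {x | ∀ i : Fin (2 * n), ((i : ℕ) < k ∨ n ≤ (i : ℕ)) → x i = 0}

/-!
Split the coordinates of `ℝ^{2n}` into those of index `≥ n + k`, which vanish at `t = 0` since
`x 0 ∈ ℝ^{n,k}`, and the others, whose mean over `[0,1]` vanishes since `∫ x ∈ J(V₀^{n,k})`.
On either part the fundamental theorem of calculus bounds `x t` by `∫₀¹ ‖ẋ‖`, and Jensen's
inequality bounds this by `‖ẋ‖_{L^p}`; so `C = 2` works.
-/

section Lebesgue

variable {α F : Type*} [MeasurableSpace α] {μ : Measure α} [NormedAddCommGroup F]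
  {g : α → F} {p : ℝ}

theorem integrable_of_integrable_norm_rpow [IsFiniteMeasure μ] (hp : 1 ≤ p)
    (hg : AEStronglyMeasurable g μ) (hgp : Integrable (fun x => ‖g x‖ ^ p) μ) :
    Integrable g μ := by
  have hp' : ENNReal.ofReal p ≠ 0 := (ENNReal.ofReal_pos.2 (zero_lt_one.trans_le hp)).ne'
  rw [← ENNReal.toReal_ofReal (zero_le_one.trans hp)] at hgp
  exact ((integrable_norm_rpow_iff hg hp' ENNReal.ofReal_ne_top).1 hgp).integrable
    (ENNReal.one_le_ofReal.2 hp)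

theorem integral_norm_le_rpow_integral_norm_rpow [IsProbabilityMeasure μ] (hp : 1 ≤ p)
    (hg : Integrable g μ) (hgp : Integrable (fun x => ‖g x‖ ^ p) μ) :
    ∫ x, ‖g x‖ ∂μ ≤ (∫ x, ‖g x‖ ^ p ∂μ) ^ (1 / p) := by
  have hp0 : 0 < p := zero_lt_one.trans_le hp
  have hA0 : 0 ≤ ∫ x, ‖g x‖ ∂μ := integral_nonneg fun _ => norm_nonneg _
  have jensen : (∫ x, ‖g x‖ ∂μ) ^ p ≤ ∫ x, ‖g x‖ ^ p ∂μ :=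
    (convexOn_rpow hp).map_integral_le (Real.continuous_rpow_const hp0.le).continuousOn isClosed_Ici
      (Eventually.of_forall fun x => norm_nonneg (g x)) hg.norm hgp
  calc ∫ x, ‖g x‖ ∂μ = ((∫ x, ‖g x‖ ∂μ) ^ p) ^ (1 / p) := by
        rw [one_div, Real.rpow_rpow_inv hA0 hp0.ne']
    _ ≤ (∫ x, ‖g x‖ ^ p ∂μ) ^ (1 / p) := by gcongr

end Lebesgue

section Calculus

variable {E : Type*} [NormedAddCommGroup E] [NormedSpace ℝ E] {f f' : ℝ → E} {a b : ℝ}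

theorem IntervalIntegrable.continuousLinearMap_comp {F : Type*} [NormedAddCommGroup F]
    [NormedSpace ℝ F] (L : E →L[ℝ] F) (hf : IntervalIntegrable f volume a b) :
    IntervalIntegrable (fun u => L (f u)) volume a b :=
  ⟨L.integrable_comp hf.1, L.integrable_comp hf.2⟩

variable [CompleteSpace E]

theorem aestronglyMeasurable_of_hasDerivAt {s : Set ℝ} (hs : MeasurableSet s)
    (hf : ∀ t ∈ s, HasDerivAt f (f' t) t) : AEStronglyMeasurable f' (volume.restrict s) := by
  refine (aestronglyMeasurable_deriv f _).congr ?_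
  filter_upwards [ae_restrict_mem hs] with t ht
  exact (hf t ht).deriv

theorem intervalIntegrable_deriv_of_intervalIntegrable_norm_rpow {p : ℝ} (hp : 1 ≤ p)
    (hab : a ≤ b) (hf : ∀ t ∈ Icc a b, HasDerivAt f (f' t) t)
    (hfp : IntervalIntegrable (fun t => ‖f' t‖ ^ p) volume a b) :
    IntervalIntegrable f' volume a b := by
  rw [intervalIntegrable_iff_integrableOn_Ioc_of_le hab] at hfp ⊢
  exact integrable_of_integrable_norm_rpow hp (aestronglyMeasurable_of_hasDerivAt
    measurableSet_Ioc fun u hu => hf u (Ioc_subset_Icc_self hu)) hfp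

theorem norm_sub_le_integral_norm_deriv (hf : ∀ t ∈ Icc a b, HasDerivAt f (f' t) t)
    (hf' : IntervalIntegrable f' volume a b) {s t : ℝ} (hs : s ∈ Icc a b) (ht : t ∈ Icc a b) :
    ‖f t - f s‖ ≤ ∫ u in a..b, ‖f' u‖ := by
  wlog hst : s ≤ t generalizing s t
  · rw [norm_sub_rev]
    exact this ht hs (le_of_not_ge hst)
  have hsub : uIcc s t ⊆ uIcc a b := by
    rw [uIcc_of_le hst, uIcc_of_le (hs.1.trans hs.2)]
    exact Icc_subset_Icc hs.1 ht.2
  have hFTC : ∫ u in s..t, f' u = f t - f s :=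
    intervalIntegral.integral_eq_sub_of_hasDerivAt
      (fun u hu => hf u (uIcc_of_le (hs.1.trans hs.2) ▸ hsub hu)) (hf'.mono_set hsub)
  calc ‖f t - f s‖ = ‖∫ u in s..t, f' u‖ := by rw [hFTC]
    _ ≤ ∫ u in s..t, ‖f' u‖ := intervalIntegral.norm_integral_le_integral_norm hst
    _ ≤ ∫ u in a..b, ‖f' u‖ := intervalIntegral.integral_mono_interval hs.1 hst ht.2
          (Eventually.of_forall fun _ => norm_nonneg _) hf'.norm

theorem norm_le_integral_norm_deriv_of_left_eq_zero
    (hf : ∀ t ∈ Icc a b, HasDerivAt f (f' t) t) (hf' : IntervalIntegrable f' volume a b)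
    (ha : f a = 0) {t : ℝ} (ht : t ∈ Icc a b) : ‖f t‖ ≤ ∫ u in a..b, ‖f' u‖ := by
  simpa [ha] using norm_sub_le_integral_norm_deriv hf hf' (left_mem_Icc.2 (ht.1.trans ht.2)) ht

theorem norm_le_integral_norm_deriv_of_integral_eq_zero
    (hf : ∀ t ∈ Icc a b, HasDerivAt f (f' t) t) (hf' : IntervalIntegrable f' volume a b)
    (hab : a < b) (hmean : ∫ u in a..b, f u = 0) {t : ℝ} (ht : t ∈ Icc a b) :
    ‖f t‖ ≤ ∫ u in a..b, ‖f' u‖ := by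
  have hfi : IntervalIntegrable f volume a b :=
    ContinuousOn.intervalIntegrable_of_Icc hab.le fun u hu =>
      (hf u hu).continuousAt.continuousWithinAt
  -- `f t` is the mean of `u ↦ f t - f u`, each term of which is bounded by the total variation.
  have hmean_sub : ∫ u in a..b, (f t - f u) = (b - a) • f t := by
    rw [intervalIntegral.integral_sub intervalIntegrable_const hfi, hmean,
      intervalIntegral.integral_const, sub_zero]
  have hbound : (b - a) * ‖f t‖ ≤ (∫ u in a..b, ‖f' u‖) * (b - a) := by
    calc (b - a) * ‖f t‖ = ‖∫ u in a..b, (f t - f u)‖ := by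
          rw [hmean_sub, norm_smul, Real.norm_of_nonneg (sub_nonneg.2 hab.le)]
      _ ≤ (∫ u in a..b, ‖f' u‖) * |b - a| :=
          intervalIntegral.norm_integral_le_of_norm_le_const fun u hu =>
            norm_sub_le_integral_norm_deriv hf hf'
              (Ioc_subset_Icc_self (uIoc_of_le hab.le ▸ hu)) ht
      _ = (∫ u in a..b, ‖f' u‖) * (b - a) := by rw [abs_of_pos (sub_pos.2 hab)]
  nlinarith [sub_pos.2 hab]

end Calculus

section CoordMask

variable {ι : Type*} [Fintype ι]

def coordMask (s : Set ι) : EuclideanSpace ℝ ι →L[ℝ] EuclideanSpace ℝ ι :=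
  LinearMap.toContinuousLinearMap
    { toFun := fun v => WithLp.toLp 2 (s.indicator (WithLp.ofLp v))
      map_add' := fun v w => by ext i; exact congrFun (Set.indicator_add' s _ _) i
      map_smul' := fun c v => by ext i; exact Set.indicator_const_smul_apply s c _ i }

@[simp]
theorem coordMask_apply (s : Set ι) (v : EuclideanSpace ℝ ι) (i : ι) :
    coordMask s v i = s.indicator (WithLp.ofLp v) i :=
  rfl

theorem norm_coordMask_le (s : Set ι) (v : EuclideanSpace ℝ ι) : ‖coordMask s v‖ ≤ ‖v‖ := by
  rw [EuclideanSpace.norm_eq, EuclideanSpace.norm_eq]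
  gcongr with i
  exact norm_indicator_le_norm_self _ _

theorem coordMask_add_coordMask_compl (s : Set ι) (v : EuclideanSpace ℝ ι) :
    coordMask s v + coordMask sᶜ v = v := by
  ext i
  simp [Set.indicator_self_add_compl_apply]

end CoordMask

theorem coordMask_eq_zero_of_mem_Rnk {n k : ℕ} {v : Esp n} (hv : v ∈ Rnk n k) :
    coordMask {i : Fin (2 * n) | n + k ≤ (i : ℕ)} v = 0 := by
  ext i
  exact Set.indicator_apply_eq_zero.2 (hv i)

theorem coordMask_compl_eq_zero_of_mem_image_Jfun_V0 {n k : ℕ} {v : Esp n}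
    (hv : v ∈ Jfun n '' V0 n k) : coordMask {i : Fin (2 * n) | n + k ≤ (i : ℕ)}ᶜ v = 0 := by
  obtain ⟨w, hw, rfl⟩ := hv
  ext i
  refine Set.indicator_apply_eq_zero.2 fun hi => ?_
  replace hi : (i : ℕ) < n + k := not_le.1 hi
  simp only [Jfun]
  split_ifs with h
  · rw [hw _ (Or.inr (by simp)), neg_zero]
  · exact hw _ (Or.inl (by simp; omega))

theorem stmt4_general (n k : ℕ) (p : ℝ) (hp : 1 < p) :
    ∃ C > 0, ∀ x x' : ℝ → Esp n,
      (∀ t ∈ Icc (0:ℝ) 1, HasDerivAt x (x' t) t) →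
      x 0 ∈ Rnk n k → x 1 ∈ Rnk n k →
      (∫ t in (0:ℝ)..1, x t) ∈ Jfun n '' V0 n k →
      IntervalIntegrable (fun t => ‖x' t‖ ^ p) volume 0 1 →
      ∀ t ∈ Icc (0:ℝ) 1, ‖x t‖ ≤ C * (∫ s in (0:ℝ)..1, ‖x' s‖ ^ p) ^ (1 / p) := by
  refine ⟨2, two_pos, fun x x' hx h0 _ hmean hx'p t ht => ?_⟩
  have hx' : IntervalIntegrable x' volume 0 1 :=
    intervalIntegrable_deriv_of_intervalIntegrable_norm_rpow hp.le zero_le_one hx hx'p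
  have hxi : IntervalIntegrable x volume 0 1 :=
    ContinuousOn.intervalIntegrable_of_Icc zero_le_one fun u hu =>
      (hx u hu).continuousAt.continuousWithinAt
  have hmask_deriv (s : Set (Fin (2 * n))) :
      ∀ u ∈ Icc (0:ℝ) 1, HasDerivAt (fun u => coordMask s (x u)) (coordMask s (x' u)) u :=
    fun u hu => (coordMask s).hasFDerivAt.comp_hasDerivAt u (hx u hu)
  have hmask_le (s : Set (Fin (2 * n))) :
      ∫ u in (0:ℝ)..1, ‖coordMask s (x' u)‖ ≤ ∫ u in (0:ℝ)..1, ‖x' u‖ :=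
    intervalIntegral.integral_mono_on zero_le_one (hx'.continuousLinearMap_comp _).norm hx'.norm
      fun u _ => norm_coordMask_le s (x' u)
  set s : Set (Fin (2 * n)) := {i | n + k ≤ (i : ℕ)}
  have hbound_s : ‖coordMask s (x t)‖ ≤ ∫ u in (0:ℝ)..1, ‖x' u‖ :=
    (norm_le_integral_norm_deriv_of_left_eq_zero (hmask_deriv s) (hx'.continuousLinearMap_comp _)
      (coordMask_eq_zero_of_mem_Rnk h0) ht).trans (hmask_le s)
  have hbound_sc : ‖coordMask sᶜ (x t)‖ ≤ ∫ u in (0:ℝ)..1, ‖x' u‖ := by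
    refine (norm_le_integral_norm_deriv_of_integral_eq_zero (hmask_deriv sᶜ)
      (hx'.continuousLinearMap_comp _) zero_lt_one ?_ ht).trans (hmask_le sᶜ)
    rw [(coordMask sᶜ).intervalIntegral_comp_comm hxi]
    exact coordMask_compl_eq_zero_of_mem_image_Jfun_V0 hmean
  have hjensen : ∫ u in (0:ℝ)..1, ‖x' u‖ ≤ (∫ u in (0:ℝ)..1, ‖x' u‖ ^ p) ^ (1 / p) := by
    have : IsProbabilityMeasure (volume.restrict (Ioc (0:ℝ) 1)) := ⟨by simp⟩
    simp only [intervalIntegral.integral_of_le zero_le_one]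
    exact integral_norm_le_rpow_integral_norm_rpow hp.le hx'.1 hx'p.1
  calc ‖x t‖ = ‖coordMask s (x t) + coordMask sᶜ (x t)‖ := by
        rw [coordMask_add_coordMask_compl]
    _ ≤ 2 * ∫ u in (0:ℝ)..1, ‖x' u‖ := by
        linarith [norm_add_le (coordMask s (x t)) (coordMask sᶜ (x t))]
    _ ≤ 2 * (∫ u in (0:ℝ)..1, ‖x' u‖ ^ p) ^ (1 / p) := by gcongr

/-- for `0 ≤ k < n` and `p > 1` there is `C > 0` such that every
`x ∈ W^{1,p}([0,1], ℝ^{2n})` with `x(0), x(1) ∈ ℝ^{n,k}` and `∫₀¹ x(t) dt ∈ J(V₀^{n,k})`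
satisfies `‖x‖_{L^∞} ≤ C ‖ẋ‖_{L^p}`. -/
theorem stmt4 (n k : ℕ) (hk : k < n) (p : ℝ) (hp : 1 < p) :
    ∃ C > 0, ∀ x x' : ℝ → Esp n,
      (∀ t ∈ Icc (0:ℝ) 1, HasDerivAt x (x' t) t) →
      x 0 ∈ Rnk n k → x 1 ∈ Rnk n k →
      (∫ t in (0:ℝ)..1, x t) ∈ Jfun n '' V0 n k →
      IntervalIntegrable (fun t => ‖x' t‖ ^ p) volume 0 1 →
      ∀ t ∈ Icc (0:ℝ) 1, ‖x t‖ ≤ C * (∫ s in (0:ℝ)..1, ‖x' s‖ ^ p) ^ (1 / p) :=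
  stmt4_general n k p hp
end
end

section
/- Consider the ellipsoid E = {(q,p) ∈ ℝ^{2n} : Σⱼ (qⱼ² + pⱼ²)/rⱼ² < 1} with r₁,…,rₙ > 0, the quadratic form H(z) = Σⱼ (qⱼ² + pⱼ²)/rⱼ², and the linear flow φᵗ(z) = exp(t J S) z with S = Diag(2/r₁²,…,2/rₙ², 2/r₁²,…,2/rₙ²). For z = (q₁,…,qₙ,p₁,…,p_k,0,…,0) ∈ ∂E ∩ ℝ^{n,k} (0 ≤ k < n) and T > 0, the conditions φᵀ(z) ∈ ℝ^{n,k} and φᵀ(z) − z ∈ V₀^{n,k} hold with z having some nonzero coordinate q_j (k+1 ≤ j ≤ n) only if T = (mπ/2)·r_j² for some positive integer m; and if instead (q_{k+1},…,qₙ) = 0 and (q_j,p_j) ≠ 0 for some 1 ≤ j ≤ k, then T = mπ·r_j² for some positive integer m. -/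
open MeasureTheory Set Filter
open scoped Pointwise

noncomputable section

/-- Index of the `q_j` coordinate. -/
def qIdx (n : ℕ) (j : Fin n) : Fin (2 * n) := ⟨(j : ℕ), by have := j.isLt; omega⟩

/-- Index of the `p_j` coordinate. -/
def pIdx (n : ℕ) (j : Fin n) : Fin (2 * n) := ⟨(j : ℕ) + n, by have := j.isLt; omega⟩

/-- The linear flow `exp(tJS)` with `S = Diag(2/r₁²,…,2/rₙ²,2/r₁²,…,2/rₙ²)`: it rotates the
`(q_j, p_j)`-plane by the angle `2t/r_j²`. -/
def rotFlow (n : ℕ) (r : Fin n → ℝ) (t : ℝ) (z : Esp n) : Esp n := WithLp.toLp 2 fun (i : Fin (2 * n)) =>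
  if h : (i : ℕ) < n then
    Real.cos (2 * t / (r ⟨(i : ℕ), h⟩) ^ 2) * z i -
      Real.sin (2 * t / (r ⟨(i : ℕ), h⟩) ^ 2) * z ⟨(i : ℕ) + n, by omega⟩
  else
    Real.sin (2 * t / (r ⟨(i : ℕ) - n, by have := i.isLt; omega⟩) ^ 2) *
        z ⟨(i : ℕ) - n, by have := i.isLt; omega⟩ +
      Real.cos (2 * t / (r ⟨(i : ℕ) - n, by have := i.isLt; omega⟩) ^ 2) * z i

/-!
The flow rotates each `(q_j, p_j)`-plane by the angle `2T/r_j²`. For `j > k` the coordinate `p_j`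
starts and ends at `0` while `q_j ≠ 0`, so the sine of that angle vanishes; for `j ≤ k` the
nonzero vector `(q_j, p_j)` is fixed by the rotation, so its cosine is `1`.
-/

theorem rotFlow_qIdx (n : ℕ) (r : Fin n → ℝ) (t : ℝ) (z : Esp n) (j : Fin n) :
    rotFlow n r t z (qIdx n j) =
      Real.cos (2 * t / r j ^ 2) * z (qIdx n j) - Real.sin (2 * t / r j ^ 2) * z (pIdx n j) := by
  simp only [rotFlow, qIdx, j.isLt, dif_pos]
  rfl

theorem rotFlow_pIdx (n : ℕ) (r : Fin n → ℝ) (t : ℝ) (z : Esp n) (j : Fin n) :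
    rotFlow n r t z (pIdx n j) =
      Real.sin (2 * t / r j ^ 2) * z (qIdx n j) + Real.cos (2 * t / r j ^ 2) * z (pIdx n j) := by
  simp only [rotFlow, pIdx, qIdx, Nat.add_sub_cancel]
  rw [dif_neg (by simp)]

theorem exists_pos_nat_of_int_mul_eq {a θ : ℝ} (ha : 0 < a) (hθ : 0 < θ) {m : ℤ}
    (h : m * a = θ) : ∃ k : ℕ, 0 < k ∧ θ = k * a := by
  have hm : 0 < m := by
    have : (0 : ℝ) < m := pos_of_mul_pos_left (h ▸ hθ) ha.le
    exact_mod_cast this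
  lift m to ℕ using hm.le
  exact ⟨m, by exact_mod_cast hm, by exact_mod_cast h.symm⟩

theorem Real.exists_pos_nat_of_sin_eq_zero {θ : ℝ} (hθ : 0 < θ) (h : Real.sin θ = 0) :
    ∃ m : ℕ, 0 < m ∧ θ = m * Real.pi := by
  obtain ⟨m, hm⟩ := Real.sin_eq_zero_iff.1 h
  exact exists_pos_nat_of_int_mul_eq Real.pi_pos hθ hm

theorem Real.exists_pos_nat_of_cos_eq_one {θ : ℝ} (hθ : 0 < θ) (h : Real.cos θ = 1) :
    ∃ m : ℕ, 0 < m ∧ θ = m * (2 * Real.pi) := by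
  obtain ⟨m, hm⟩ := (Real.cos_eq_one_iff θ).1 h
  exact exists_pos_nat_of_int_mul_eq Real.two_pi_pos hθ hm

theorem Real.cos_eq_one_of_rotate_eq_self {θ q p : ℝ} (hw : q ≠ 0 ∨ p ≠ 0)
    (hq : Real.cos θ * q - Real.sin θ * p = q) (hp : Real.sin θ * q + Real.cos θ * p = p) :
    Real.cos θ = 1 := by
  -- `|e^{iθ} - 1|² = 2 - 2 cos θ`, and `e^{iθ} - 1` kills the nonzero vector `(q, p)`.
  have hq' : (2 - 2 * Real.cos θ) * q = 0 := by
    linear_combination (Real.cos θ - 1) * hq + Real.sin θ * hp - q * Real.sin_sq_add_cos_sq θ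
  have hp' : (2 - 2 * Real.cos θ) * p = 0 := by
    linear_combination (Real.cos θ - 1) * hp - Real.sin θ * hq - p * Real.sin_sq_add_cos_sq θ
  rcases hw with hw | hw
  · linarith [(mul_eq_zero.1 hq').resolve_right hw]
  · linarith [(mul_eq_zero.1 hp').resolve_right hw]

theorem eq_div_two_mul_sq_of_two_mul_div_sq_eq {T r a : ℝ} (hr : r ≠ 0) (h : 2 * T / r ^ 2 = a) :
    T = a / 2 * r ^ 2 := by
  rw [← h]
  field_simp

theorem stmt13_general (n k : ℕ) (r : Fin n → ℝ) (hr : ∀ j, 0 < r j)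
    (z : Esp n) (hz : z ∈ Rnk n k)
    (T : ℝ) (hT : 0 < T)
    (h1 : rotFlow n r T z ∈ Rnk n k)
    (h2 : rotFlow n r T z - z ∈ V0 n k) :
    (∀ j : Fin n, k ≤ (j : ℕ) → z (qIdx n j) ≠ 0 →
        ∃ m : ℕ, 0 < m ∧ T = (m : ℝ) * Real.pi / 2 * (r j) ^ 2) ∧
    ((∀ j : Fin n, k ≤ (j : ℕ) → z (qIdx n j) = 0) →
      ∀ j : Fin n, (j : ℕ) < k → (z (qIdx n j) ≠ 0 ∨ z (pIdx n j) ≠ 0) →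
        ∃ m : ℕ, 0 < m ∧ T = (m : ℝ) * Real.pi * (r j) ^ 2) := by
  have hθ : ∀ j, 0 < 2 * T / r j ^ 2 := fun j => by have := hr j; positivity
  constructor
  · intro j hjk hq
    have hp : z (pIdx n j) = 0 := hz _ (by simp only [pIdx]; omega)
    have hsin : Real.sin (2 * T / r j ^ 2) = 0 := by
      have h := h1 (pIdx n j) (by simp only [pIdx]; omega)
      rw [rotFlow_pIdx, hp, mul_zero, add_zero] at h
      exact (mul_eq_zero.1 h).resolve_right hq
    obtain ⟨m, hm, hθm⟩ := Real.exists_pos_nat_of_sin_eq_zero (hθ j) hsin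
    exact ⟨m, hm, eq_div_two_mul_sq_of_two_mul_div_sq_eq (hr j).ne' hθm⟩
  · intro _ j hjk hw
    have hfix : ∀ i : Fin (2 * n), (i : ℕ) < k ∨ n ≤ (i : ℕ) → rotFlow n r T z i = z i :=
      fun i hi => sub_eq_zero.1 (h2 i hi)
    have hcos := Real.cos_eq_one_of_rotate_eq_self hw
      (rotFlow_qIdx n r T z j ▸ hfix _ (.inl hjk))
      (rotFlow_pIdx n r T z j ▸ hfix _ (.inr (by simp only [pIdx]; omega)))
    obtain ⟨m, hm, hθm⟩ := Real.exists_pos_nat_of_cos_eq_one (hθ j) hcos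
    refine ⟨m, hm, ?_⟩
    rw [eq_div_two_mul_sq_of_two_mul_div_sq_eq (hr j).ne' hθm]
    ring

/-- for `z ∈ ∂E(r₁,…,rₙ) ∩ ℝ^{n,k}` and `T > 0` with `exp(TJS) z ∈ ℝ^{n,k}` and
`exp(TJS) z - z ∈ V₀^{n,k}`: if some `q_j ≠ 0` with `j > k` then `T = (mπ/2) r_j²` for a
positive integer `m`; and if `(q_{k+1},…,qₙ) = 0` and `(q_j, p_j) ≠ 0` for some `j ≤ k` then
`T = mπ r_j²` for a positive integer `m`. -/
theorem stmt13 (n k : ℕ) (hk : k < n) (r : Fin n → ℝ) (hr : ∀ j, 0 < r j)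
    (z : Esp n) (hz : z ∈ Rnk n k)
    (hbd : ∑ j : Fin n, ((z (qIdx n j)) ^ 2 + (z (pIdx n j)) ^ 2) / (r j) ^ 2 = 1)
    (T : ℝ) (hT : 0 < T)
    (h1 : rotFlow n r T z ∈ Rnk n k)
    (h2 : rotFlow n r T z - z ∈ V0 n k) :
    (∀ j : Fin n, k ≤ (j : ℕ) → z (qIdx n j) ≠ 0 →
        ∃ m : ℕ, 0 < m ∧ T = (m : ℝ) * Real.pi / 2 * (r j) ^ 2) ∧
    ((∀ j : Fin n, k ≤ (j : ℕ) → z (qIdx n j) = 0) →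
      ∀ j : Fin n, (j : ℕ) < k → (z (qIdx n j) ≠ 0 ∨ z (pIdx n j) ≠ 0) →
        ∃ m : ℕ, 0 < m ∧ T = (m : ℝ) * Real.pi * (r j) ^ 2) :=
  stmt13_general n k r hr z hz T hT h1 h2
end
end

section
/- Consider the circle flow on ℝ², ż = 2J(z − a·e₂) where a ∈ (−1,1), e₂ = (0,1), and z moves on the unit circle centered at (0,a). Suppose z(0) = (q, 0) and z(T) ∈ ℝ × {0} with T > 0 minimal, where q² + a² = 1 and q = sign(−a)·√(1−a²) (with q = √(1−a²) when a ≤ 0). Then the symplectic action A(z) = (1/2)∫₀ᵀ ⟨−J ż, z⟩ dt equals arcsin(r) − r√(1−r²) where r = √(1−a²). -/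
open MeasureTheory Set Filter
open scoped Pointwise

noncomputable section

/-!
With `θ = arccos |a|`, the initial point is `z(0) - c = σ (sin θ, cos θ)` for a sign `σ`, and the
flow rotates it about `c` with angular speed `2`. Hence `z(t) = c + σ (-sin (2t - θ), cos (2t - θ))`,
whose second coordinate `σ (cos (2t - θ) - cos θ)` first vanishes again at `T = θ`. Along the
trajectory the integrand is `2 - 2 cos θ cos (2t - θ)`, so the action is `θ - sin θ cos θ`, and
`sin θ = √(1 - a²)`.
-/

open Real

lemma Jfun_one_apply_zero (x : Esp 1) : Jfun 1 x 0 = -x 1 := by simp [Jfun]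

lemma Jfun_one_apply_one (x : Esp 1) : Jfun 1 x 1 = x 0 := by simp [Jfun]

lemma inner_neg_Jfun_one (x y : Esp 1) :
    inner ℝ (-Jfun 1 x) y = x 1 * y 0 - x 0 * y 1 := by
  simp only [inner_neg_left, PiLp.inner_apply, RCLike.inner_apply, conj_trivial]
  rw [Fin.sum_univ_two, Jfun_one_apply_zero, Jfun_one_apply_one]
  ring

lemma eq_zero_of_hasDerivAt_rotation {u v : ℝ → ℝ} {ω : ℝ}
    (hu : ∀ t, HasDerivAt u (-(ω * v t)) t) (hv : ∀ t, HasDerivAt v (ω * u t) t)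
    (hu0 : u 0 = 0) (hv0 : v 0 = 0) (t : ℝ) : u t = 0 ∧ v t = 0 := by
  have hE : ∀ s, HasDerivAt (fun s => u s ^ 2 + v s ^ 2) 0 s := fun s =>
    (((hu s).pow 2).add ((hv s).pow 2)).congr_deriv (by ring)
  have hconst : u t ^ 2 + v t ^ 2 = u 0 ^ 2 + v 0 ^ 2 :=
    is_const_of_deriv_eq_zero (fun s => (hE s).differentiableAt) (fun s => (hE s).deriv) t 0
  rw [hu0, hv0] at hconst
  constructor <;> nlinarith [sq_nonneg (u t), sq_nonneg (v t)]

lemma eq_rotation_of_hasDerivAt {u v : ℝ → ℝ} {ω : ℝ}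
    (hu : ∀ t, HasDerivAt u (-(ω * v t)) t) (hv : ∀ t, HasDerivAt v (ω * u t) t) (t : ℝ) :
    u t = u 0 * cos (ω * t) - v 0 * sin (ω * t) ∧
      v t = u 0 * sin (ω * t) + v 0 * cos (ω * t) := by
  have hcos : ∀ s, HasDerivAt (fun s => cos (ω * s)) (-(ω * sin (ω * s))) s := fun s =>
    ((hasDerivAt_id s).const_mul ω).cos.congr_deriv (by simp only [id_eq, mul_one]; ring)
  have hsin : ∀ s, HasDerivAt (fun s => sin (ω * s)) (ω * cos (ω * s)) s := fun s =>
    ((hasDerivAt_id s).const_mul ω).sin.congr_deriv (by simp only [id_eq, mul_one]; ring)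
  have h := eq_zero_of_hasDerivAt_rotation
    (u := fun s => u s - (u 0 * cos (ω * s) - v 0 * sin (ω * s)))
    (v := fun s => v s - (u 0 * sin (ω * s) + v 0 * cos (ω * s)))
    (fun s => ((hu s).sub (((hcos s).const_mul _).sub ((hsin s).const_mul _))).congr_deriv
      (by ring))
    (fun s => ((hv s).sub (((hsin s).const_mul _).add ((hcos s).const_mul _))).congr_deriv
      (by ring))
    (by simp) (by simp) t
  exact ⟨sub_eq_zero.mp h.1, sub_eq_zero.mp h.2⟩

lemma eq_rotation_of_hasDerivAt_smul_Jfun {z z' : ℝ → Esp 1} {c : Esp 1} {ω : ℝ}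
    (hderiv : ∀ t, HasDerivAt z (z' t) t) (hODE : ∀ t, z' t = ω • Jfun 1 (z t - c)) (t : ℝ) :
    z t 0 - c 0 = (z 0 0 - c 0) * cos (ω * t) - (z 0 1 - c 1) * sin (ω * t) ∧
      z t 1 - c 1 = (z 0 0 - c 0) * sin (ω * t) + (z 0 1 - c 1) * cos (ω * t) := by
  have hcoord : ∀ i s, HasDerivAt (fun s => z s i - c i) (z' s i) s := fun i s =>
    ((EuclideanSpace.proj i).hasFDerivAt.comp_hasDerivAt s (hderiv s)).sub_const (c i)
  refine eq_rotation_of_hasDerivAt (u := fun s => z s 0 - c 0) (v := fun s => z s 1 - c 1)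
    (fun s => ?_) (fun s => ?_) t
  · simpa [hODE, Jfun_one_apply_zero, mul_sub] using hcoord 0 s
  · simpa [hODE, Jfun_one_apply_one] using hcoord 1 s

lemma eq_polar_of_hasDerivAt_smul_Jfun {z z' : ℝ → Esp 1} {c : Esp 1} {ω σ θ : ℝ}
    (hderiv : ∀ t, HasDerivAt z (z' t) t) (hODE : ∀ t, z' t = ω • Jfun 1 (z t - c))
    (h0 : z 0 0 - c 0 = σ * sin θ) (h1 : z 0 1 - c 1 = σ * cos θ) (t : ℝ) :
    z t 0 - c 0 = -σ * sin (ω * t - θ) ∧ z t 1 - c 1 = σ * cos (ω * t - θ) := by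
  obtain ⟨ht0, ht1⟩ := eq_rotation_of_hasDerivAt_smul_Jfun hderiv hODE t
  rw [h0, h1] at ht0 ht1
  rw [sin_sub, cos_sub]
  exact ⟨by linear_combination ht0, by linear_combination ht1⟩

lemma cos_lt_cos_two_mul_sub {θ t : ℝ} (hθ : θ ≤ π) (ht : t ∈ Ioo 0 θ) :
    cos θ < cos (2 * t - θ) := by
  rw [← cos_abs (2 * t - θ)]
  exact cos_lt_cos_of_nonneg_of_le_pi (abs_nonneg _) hθ
    (abs_lt.mpr ⟨by linarith [ht.1], by linarith [ht.2]⟩)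

lemma eq_of_mul_cos_two_mul_sub_sub_cos_eq_zero {σ θ T : ℝ} (hσ : σ ≠ 0) (hθ0 : 0 < θ)
    (hθ : θ ≤ π) (hT : 0 < T) (hend : σ * (cos (2 * T - θ) - cos θ) = 0)
    (hmin : ∀ t ∈ Ioo 0 T, σ * (cos (2 * t - θ) - cos θ) ≠ 0) : T = θ := by
  rcases lt_trichotomy T θ with h | h | h
  · have := cos_lt_cos_two_mul_sub hθ ⟨hT, h⟩
    exact absurd hend (mul_ne_zero hσ (by linarith))
  · exact h
  · exact absurd (by ring_nf) (hmin θ ⟨hθ0, h⟩)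

lemma integral_two_sub_two_mul_cos_mul_cos (θ : ℝ) :
    ∫ t in (0 : ℝ)..θ, (2 - 2 * cos θ * cos (2 * t - θ)) = 2 * (θ - sin θ * cos θ) := by
  have hF : ∀ t, HasDerivAt (fun t => 2 * t - cos θ * sin (2 * t - θ))
      (2 - 2 * cos θ * cos (2 * t - θ)) t := fun t =>
    (((hasDerivAt_id t).const_mul 2).sub
      ((((hasDerivAt_id t).const_mul 2).sub_const θ).sin.const_mul (cos θ))).congr_deriv
      (by simp only [id_eq, mul_one]; ring)
  rw [intervalIntegral.integral_eq_sub_of_hasDerivAt (fun t _ => hF t)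
    (Continuous.intervalIntegrable (by fun_prop) _ _)]
  simp only [mul_zero, zero_sub, sin_neg, show 2 * θ - θ = θ by ring]
  ring

lemma arcsin_sin_sub_sin_mul_sqrt {θ : ℝ} (h0 : 0 ≤ θ) (hθ : θ ≤ π / 2) :
    arcsin (sin θ) - sin θ * √(1 - sin θ ^ 2) = θ - sin θ * cos θ := by
  rw [arcsin_sin (by linarith [pi_pos]) hθ, ← cos_sq',
    sqrt_sq (cos_nonneg_of_mem_Icc ⟨by linarith [pi_pos], hθ⟩)]

lemma exists_sign_eq_sin_cos_arccos_abs {a q : ℝ} (ha : a ∈ Ioo (-1 : ℝ) 1)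
    (hq1 : a ≤ 0 → q = √(1 - a ^ 2)) (hq2 : 0 < a → q = -√(1 - a ^ 2)) :
    ∃ σ : ℝ, σ ^ 2 = 1 ∧ q = σ * sin (arccos |a|) ∧ -a = σ * cos (arccos |a|) := by
  have ha' := abs_lt.mpr ha
  rw [sin_arccos, cos_arccos (by linarith [abs_nonneg a]) ha'.le, sq_abs]
  rcases le_or_gt a 0 with h | h
  · exact ⟨1, by norm_num, by simp [hq1 h], by simp [abs_of_nonpos h]⟩
  · exact ⟨-1, by norm_num, by simp [hq2 h], by simp [abs_of_pos h]⟩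

/-- for the circle flow `ż = 2J(z - a·e₂)` on `ℝ²` with `a ∈ (-1,1)`, starting at
`z(0) = (q, 0)` with `q² + a² = 1`, `q = √(1-a²)` if `a ≤ 0` and `q = -√(1-a²)` if `a > 0`,
and `T > 0` the minimal return time to `ℝ × {0}`, the symplectic action
`(1/2)∫₀ᵀ ⟨-J ż, z⟩` equals `arcsin r - r √(1-r²)` with `r = √(1-a²)`. -/
theorem stmt15 (a q T : ℝ) (ha : a ∈ Ioo (-1 : ℝ) 1)
    (hq1 : a ≤ 0 → q = Real.sqrt (1 - a ^ 2))
    (hq2 : 0 < a → q = -Real.sqrt (1 - a ^ 2))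
    (hT : 0 < T)
    (z z' : ℝ → Esp 1) (c : Esp 1)
    (hc0 : c ⟨0, by omega⟩ = 0) (hc1 : c ⟨1, by omega⟩ = a)
    (hderiv : ∀ t, HasDerivAt z (z' t) t)
    (hODE : ∀ t, z' t = (2 : ℝ) • Jfun 1 (z t - c))
    (hz0q : z 0 ⟨0, by omega⟩ = q) (hz0p : z 0 ⟨1, by omega⟩ = 0)
    (hend : z T ⟨1, by omega⟩ = 0)
    (hmin : ∀ t ∈ Ioo (0:ℝ) T, z t ⟨1, by omega⟩ ≠ 0) :
    (1 / 2) * ∫ t in (0:ℝ)..T, (inner ℝ (-Jfun 1 (z' t)) (z t) : ℝ) =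
      Real.arcsin (Real.sqrt (1 - a ^ 2)) -
        Real.sqrt (1 - a ^ 2) * Real.sqrt (1 - (Real.sqrt (1 - a ^ 2)) ^ 2) := by
  simp only [Fin.mk_zero, Fin.mk_one] at hc0 hc1 hz0q hz0p hend hmin
  set θ := arccos |a|
  have hθ0 : 0 < θ := arccos_pos.mpr (abs_lt.mpr ha)
  have hθπ : θ ≤ π / 2 := arccos_le_pi_div_two.mpr (abs_nonneg a)
  obtain ⟨σ, hσ, hqσ, haσ⟩ := exists_sign_eq_sin_cos_arccos_abs ha hq1 hq2
  have hz := eq_polar_of_hasDerivAt_smul_Jfun hderiv hODE (by rw [hz0q, hc0, sub_zero, hqσ])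
    (by rw [hz0p, hc1, zero_sub, haσ])
  have hx : ∀ t, z t 0 = -σ * sin (2 * t - θ) := fun t => by linear_combination (hz t).1 + hc0
  have hy : ∀ t, z t 1 = σ * (cos (2 * t - θ) - cos θ) := fun t => by
    linear_combination (hz t).2 + hc1 - haσ
  have hTθ : T = θ := eq_of_mul_cos_two_mul_sub_sub_cos_eq_zero (by rintro rfl; norm_num at hσ)
    hθ0 (by linarith [pi_pos]) hT (hy T ▸ hend) (fun t ht => hy t ▸ hmin t ht)
  have hintegrand : ∀ t, inner ℝ (-Jfun 1 (z' t)) (z t) = 2 - 2 * cos θ * cos (2 * t - θ) := by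
    intro t
    rw [inner_neg_Jfun_one, hODE]
    simp only [PiLp.smul_apply, Jfun_one_apply_zero, Jfun_one_apply_one, PiLp.sub_apply, hc0,
      hc1, hx, hy, smul_eq_mul]
    linear_combination 2 * σ ^ 2 * sin_sq_add_cos_sq (2 * t - θ)
      + (2 - 2 * cos (2 * t - θ) * cos θ) * hσ + 2 * σ * (cos (2 * t - θ) - cos θ) * haσ
  have hr : √(1 - a ^ 2) = sin θ := by rw [sin_arccos, sq_abs]
  rw [hr, arcsin_sin_sub_sin_mul_sqrt hθ0.le hθπ, hTθ,
    intervalIntegral.integral_congr (fun t _ => hintegrand t),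
    integral_two_sub_two_mul_cos_mul_cos]
  ring
end
end

section
/- Let D_a = B^{2n}((0,…,0,a), 1) ⊂ ℝ^{2n} be the unit ball centered at (0,…,0,a) with a ∈ [0,1), and D_a⁻ = {x ∈ D_a : pₙ ≤ 0}. With r = √(1−a²) and θ = arcsin(r), the volume of D_a⁻ equals (π^{n−1}/n!)·(θ − cos θ · Σ_{j=0}^{n−1} ((2n−2j−2)!!/(2n−2j−1)!!)·sin^{2n−2j−1}θ). -/
/-!
Cavalieri along the last coordinate: the slice of `D_a⁻` at height `t ∈ [a - 1, 0]` is a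
`(2n-1)`-ball of radius `√(1 - (t - a)²)`, so
`vol D_a⁻ = ω_{2n-1} ∫_{a-1}^0 √(1 - (t - a)²)^{2n-1} dt`.
The substitution `t = a - cos x` turns this into `ω_{2n-1} ∫_0^θ sin^{2n} x dx`, as
`θ = arcsin √(1 - a²) = arccos a`, and the reduction formula for `∫ sin^{2n}` unrolls
into the sum.
-/

open MeasureTheory Set Filter
open scoped Pointwise

noncomputable section

open Real Metric intervalIntegral
open scoped Nat

namespace EuclideanSpace

lemma volume_eq_lintegral_volume_snoc {M : ℕ} {s : Set (EuclideanSpace ℝ (Fin (M + 1)))}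
    (hs : MeasurableSet s) :
    volume s = ∫⁻ t, volume {y : EuclideanSpace ℝ (Fin M) |
      WithLp.toLp 2 (Fin.snoc (α := fun _ => ℝ) y.ofLp t) ∈ s} := by
  let e := (MeasurableEquiv.toLp 2 (Fin (M + 1) → ℝ)).symm.trans
    (MeasurableEquiv.piFinSuccAbove (fun _ => ℝ) (Fin.last M))
  have he : MeasurePreserving e volume (volume.prod volume) :=
    (volume_preserving_piFinSuccAbove (fun _ : Fin (M + 1) => ℝ) (Fin.last M)).comp
      (volume_preserving_symm_measurableEquiv_toLp (Fin (M + 1)))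
  rw [← he.symm.measure_preimage hs.nullMeasurableSet,
    Measure.prod_apply (e.symm.measurable hs)]
  congr 1 with t
  rw [← (PiLp.volume_preserving_ofLp (Fin M)).measure_preimage
    (measurable_prodMk_left (e.symm.measurable hs)).nullMeasurableSet]
  congr 1 with y
  simp [e, MeasurableEquiv.piFinSuccAbove, Fin.snocEquiv]

lemma dist_snoc_single_last_sq {M : ℕ} (y : EuclideanSpace ℝ (Fin M)) (t a : ℝ) :
    dist (WithLp.toLp 2 (Fin.snoc (α := fun _ => ℝ) y.ofLp t) : EuclideanSpace ℝ (Fin (M + 1)))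
      (single (Fin.last M) a) ^ 2 = ‖y‖ ^ 2 + (t - a) ^ 2 := by
  rw [dist_eq, sq_sqrt (by positivity), norm_eq, sq_sqrt (by positivity), Fin.sum_univ_castSucc]
  simp [Real.dist_eq, sq_abs, (Fin.castSucc_lt_last _).ne]

lemma volume_ball_inter_last_le {M : ℕ} (a h : ℝ) {r : ℝ} (hr : 0 ≤ r) :
    volume {x ∈ ball (single (Fin.last M) a) r | x (Fin.last M) ≤ h} =
      ∫⁻ t in Iic h,
        volume (ball (0 : EuclideanSpace ℝ (Fin M)) √(r ^ 2 - (t - a) ^ 2)) := by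
  have hs : MeasurableSet {x ∈ ball (single (Fin.last M) a) r | x (Fin.last M) ≤ h} :=
    measurableSet_ball.inter (measurableSet_le (by fun_prop) measurable_const :
      MeasurableSet {x : EuclideanSpace ℝ (Fin (M + 1)) | x (Fin.last M) ≤ h})
  rw [volume_eq_lintegral_volume_snoc hs, ← lintegral_indicator measurableSet_Iic]
  congr 1 with t
  by_cases ht : t ≤ h
  · rw [indicator_of_mem (mem_Iic.mpr ht)]
    congr 1 with y
    have hdist := dist_snoc_single_last_sq y t a
    simp only [mem_ofPred_eq, mem_ball, Fin.snoc_last, ht, and_true, dist_zero_right,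
      lt_sqrt (norm_nonneg y)]
    rw [← sq_lt_sq₀ dist_nonneg hr]
    constructor <;> intro <;> linarith
  · rw [indicator_of_notMem (by simpa using ht)]
    simp [ht]

end EuclideanSpace

lemma lintegral_Iic_ofReal_sqrt_one_sub_sq_pow {a : ℝ} (ha : a ≤ 1) {k : ℕ} (hk : k ≠ 0) :
    ∫⁻ t in Iic 0, ENNReal.ofReal √(1 - (t - a) ^ 2) ^ k =
      ENNReal.ofReal (∫ t in (a - 1)..0, √(1 - (t - a) ^ 2) ^ k) := by
  have houtside : ∀ t ∈ Iic (a - 1), ENNReal.ofReal √(1 - (t - a) ^ 2) ^ k = 0 := by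
    intro t ht
    have : 1 - (t - a) ^ 2 ≤ 0 := by nlinarith [mem_Iic.mp ht]
    simp [sqrt_eq_zero_of_nonpos this, hk]
  rw [← Iic_union_Ioc_eq_Iic (by linarith : a - 1 ≤ 0),
    lintegral_union measurableSet_Ioc (Iic_disjoint_Ioc le_rfl),
    setLIntegral_congr_fun measurableSet_Iic houtside, lintegral_zero, zero_add,
    integral_of_le (by linarith), ofReal_integral_eq_lintegral_ofReal
      (Continuous.integrableOn_Ioc (by fun_prop)) (.of_forall fun t => by positivity)]
  simp_rw [ENNReal.ofReal_pow (sqrt_nonneg _)]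

lemma integral_sqrt_one_sub_sq_pow_eq_integral_sin_pow {a : ℝ} (ha : a ∈ Icc (-1) 1) (k : ℕ) :
    ∫ t in (a - 1)..0, √(1 - (t - a) ^ 2) ^ k = ∫ x in 0..arccos a, sin x ^ (k + 1) := by
  have hsubst := integral_comp_mul_deriv (f := fun x => a - cos x) (f' := sin)
    (g := fun t => √(1 - (t - a) ^ 2) ^ k) (a := 0) (b := arccos a)
    (fun x _ => by simpa using (hasDerivAt_cos x).const_sub a) (by fun_prop) (by fun_prop)
  simp only [cos_zero, cos_arccos ha.1 ha.2, sub_self] at hsubst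
  rw [← hsubst]
  refine integral_congr fun x hx => ?_
  rw [uIcc_of_le (arccos_nonneg a)] at hx
  have hsin : 0 ≤ sin x := sin_nonneg_of_nonneg_of_le_pi hx.1 (hx.2.trans (arccos_le_pi a))
  rw [Function.comp_apply, sub_sub_cancel_left, neg_sq, ← sin_sq, sqrt_sq hsin, pow_succ]

lemma integral_sin_pow_two_mul (k : ℕ) (θ : ℝ) :
    ∫ x in 0..θ, sin x ^ (2 * k) = ((2 * k - 1)‼ / (2 * k)‼ : ℝ) * (θ - cos θ *
      ∑ j ∈ Finset.range k, ((2 * j)‼ / (2 * j + 1)‼ : ℝ) * sin θ ^ (2 * j + 1)) := by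
  induction k with
  | zero => simp
  | succ k ih =>
    have hodd : ((2 * k + 1)‼ : ℝ) = (2 * k + 1) * (2 * k - 1)‼ := by
      rw [Nat.doubleFactorial_add_one]; push_cast; ring
    have heven : ((2 * k + 2)‼ : ℝ) = (2 * k + 2) * (2 * k)‼ := by
      rw [Nat.doubleFactorial_add_two]; push_cast; ring
    have : (0 : ℝ) < (2 * k - 1)‼ := by exact_mod_cast Nat.doubleFactorial_pos _
    have : (0 : ℝ) < (2 * k)‼ := by exact_mod_cast Nat.doubleFactorial_pos _
    rw [mul_add_one, integral_sin_pow, ih, Finset.sum_range_succ,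
      show 2 * k + 2 - 1 = 2 * k + 1 by omega, hodd, heven]
    simp only [sin_zero, cos_zero]
    push_cast
    field_simp
    ring

lemma sum_range_doubleFactorial_ratio_reflect (n : ℕ) (s : ℝ) :
    ∑ j ∈ Finset.range n, ((2 * j)‼ / (2 * j + 1)‼ : ℝ) * s ^ (2 * j + 1) =
      ∑ j ∈ Finset.range n,
        ((2 * n - 2 * j - 2)‼ / (2 * n - 2 * j - 1)‼ : ℝ) * s ^ (2 * n - 2 * j - 1) := by
  rw [← Finset.sum_range_reflect]
  refine Finset.sum_congr rfl fun j hj => ?_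
  have hj := Finset.mem_range.mp hj
  rw [show 2 * (n - 1 - j) = 2 * n - 2 * j - 2 by omega,
    show 2 * n - 2 * j - 2 + 1 = 2 * n - 2 * j - 1 by omega]

-- `π ^ m * 2 ^ (m + 1) / (2m+1)‼` is the volume of the unit ball of `ℝ^{2m+1}`.
lemma pi_pow_mul_two_pow_div_doubleFactorial_mul_doubleFactorial_ratio (m : ℕ) :
    π ^ m * 2 ^ (m + 1) / (2 * m + 1)‼ * ((2 * (m + 1) - 1)‼ / (2 * (m + 1))‼ : ℝ) =
      π ^ m / (m + 1)! := by
  rw [Nat.doubleFactorial_two_mul, show 2 * (m + 1) - 1 = 2 * m + 1 by omega]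
  have : (0 : ℝ) < (2 * m + 1)‼ := by exact_mod_cast Nat.doubleFactorial_pos _
  push_cast
  field_simp

/-- with `D_a = B^{2n}((0,…,0,a), 1)`, `a ∈ [0,1)`, and
`D_a⁻ = {x ∈ D_a : pₙ ≤ 0}`, `r = √(1-a²)`, `θ = arcsin r`, the volume of `D_a⁻` is
`(π^{n-1}/n!)·(θ - cos θ · Σ_{j=0}^{n-1} ((2n-2j-2)!!/(2n-2j-1)!!)·sin^{2n-2j-1} θ)`,
double factorials taken with the standard convention `0!! = (-1)!! = 1`. -/
theorem stmt18 (n : ℕ) (hn : 0 < n) (a : ℝ) (ha : a ∈ Ico (0 : ℝ) 1) :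
    let ca : Esp n := WithLp.toLp 2 fun (i : Fin (2 * n)) => if (i : ℕ) = 2 * n - 1 then a else 0
    let Da : Set (Esp n) := Metric.ball ca 1
    let Dm := {x ∈ Da | x ⟨2 * n - 1, by omega⟩ ≤ 0}
    let θ := Real.arcsin (Real.sqrt (1 - a ^ 2))
    volume Dm = ENNReal.ofReal (Real.pi ^ (n - 1) / (n.factorial) *
      (θ - Real.cos θ * ∑ j ∈ Finset.range n,
        ((Nat.doubleFactorial (2 * n - 2 * j - 2) : ℝ) /
            (Nat.doubleFactorial (2 * n - 2 * j - 1))) *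
          Real.sin θ ^ (2 * n - 2 * j - 1))) := by
  obtain ⟨m, rfl⟩ : ∃ m, n = m + 1 := ⟨n - 1, by omega⟩
  intro ca Da Dm θ
  have hlast : (⟨2 * (m + 1) - 1, by omega⟩ : Fin (2 * (m + 1))) = Fin.last (2 * m + 1) :=
    Fin.ext (by simp; omega)
  have hca : ca = EuclideanSpace.single (Fin.last (2 * m + 1)) a := by
    ext i
    simp [ca, ← hlast, Fin.ext_iff]
  have hDm : Dm = {x ∈ ball (EuclideanSpace.single (Fin.last (2 * m + 1)) a) 1 |
      x (Fin.last (2 * m + 1)) ≤ 0} := by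
    simp only [Dm, Da, hca, hlast]
    rfl
  have hslice (t : ℝ) :
      volume (ball (0 : EuclideanSpace ℝ (Fin (2 * m + 1))) √(1 ^ 2 - (t - a) ^ 2)) =
        ENNReal.ofReal √(1 - (t - a) ^ 2) ^ (2 * m + 1) *
          ENNReal.ofReal (π ^ m * 2 ^ (m + 1) / (2 * m + 1)‼) := by
    rw [one_pow, InnerProductSpace.volume_ball_of_dim_odd finrank_euclideanSpace_fin,
      finrank_euclideanSpace_fin]
  have hθ : θ = arccos a := (arccos_eq_arcsin ha.1).symm
  rw [hDm]
  refine (EuclideanSpace.volume_ball_inter_last_le (M := 2 * m + 1) a 0 zero_le_one).trans ?_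
  simp_rw [hslice]
  rw [lintegral_mul_const' _ _ ENNReal.ofReal_ne_top,
    lintegral_Iic_ofReal_sqrt_one_sub_sq_pow ha.2.le (by omega),
    integral_sqrt_one_sub_sq_pow_eq_integral_sin_pow ⟨by linarith [ha.1], ha.2.le⟩,
    ← ENNReal.ofReal_mul' (by positivity), hθ, show 2 * m + 1 + 1 = 2 * (m + 1) by ring,
    integral_sin_pow_two_mul, sum_range_doubleFactorial_ratio_reflect, Nat.add_sub_cancel,
    ← pi_pow_mul_two_pow_div_doubleFactorial_mul_doubleFactorial_ratio]
  congr 1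
  ring
end
end
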